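/- arXiv:2207.05904 — 2 statements merged into one kernel-verified Lean document; each statement's English description precedes it below -/
import Mathlib

section
/- For every integer g ≥ 5, there exists a (2,2,g)-graph with exactly ⌈g/2⌉·⌊3g/2⌋ vertices; consequently this number equals 3g²/4 when g is even and (3g² + 2g − 1)/4 when g is odd. -/
/-- A mixed graph: a set of undirected edges (a symmetric irreflexive relation)
together with a set of directed arcs (an irreflexive relation), with no loops.
Since edges and arcs are given by relations, there are no repeated edges or arcs. -/
structure MixedGraph (V : Type*) where
  Edge : V → V → Prop
  Arc : V → V → Prop
  edge_symm : ∀ {u v}, Edge u v → Edge v u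
  edge_irrefl : ∀ v, ¬ Edge v v
  arc_irrefl : ∀ v, ¬ Arc v v

/-- A cycle of length `len ≥ 1` in a mixed graph: a cyclic sequence of vertices
`vert : ZMod len → V` where each consecutive pair `(vert i, vert (i+1))` is joined
either by an arc from `vert i` to `vert (i+1)` (when `useArc i = true`) or by an
undirected edge (when `useArc i = false`), and no edge or arc is used more than once. -/
structure MixedCycle {V : Type*} (G : MixedGraph V) where
  len : ℕ
  len_pos : 0 < len
  vert : ZMod len → V
  useArc : ZMod len → Bool
  step_arc : ∀ i, useArc i = true → G.Arc (vert i) (vert (i + 1))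
  step_edge : ∀ i, useArc i = false → G.Edge (vert i) (vert (i + 1))
  arc_once : ∀ i j, useArc i = true → useArc j = true →
    vert i = vert j → vert (i + 1) = vert (j + 1) → i = j
  edge_once : ∀ i j, useArc i = false → useArc j = false →
    ((vert i = vert j ∧ vert (i + 1) = vert (j + 1)) ∨
      (vert i = vert (j + 1) ∧ vert (i + 1) = vert j)) → i = j

/-- A mixed graph has girth `g` if it has a cycle of length `g` and no shorter cycle. -/
def MixedGraph.HasGirth {V : Type*} (G : MixedGraph V) (g : ℕ) : Prop :=
  (∃ c : MixedCycle G, c.len = g) ∧ ∀ c : MixedCycle G, g ≤ c.len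

/-- An `(r,z,g)`-graph: every vertex is incident with exactly `r` undirected edges,
every vertex has out-degree exactly `z`, and the girth is `g`. -/
def IsMixedRZG {V : Type*} (G : MixedGraph V) (r z g : ℕ) : Prop :=
  (∀ v, Nat.card {u | G.Edge v u} = r) ∧
  (∀ v, Nat.card {u | G.Arc v u} = z) ∧
  G.HasGirth g

/-!
Both graphs are Cayley mixed graphs of an abelian group with one edge generator `u` and two arc
generators `α`, `β`. A cycle never traverses an edge straight back, so a cycle made of edges only
runs around `⟨u⟩` in one direction, while a cycle with `p` arcs along `α`, `q` along `β` and
`e₁`, `e₂` edges along `u`, `-u` yields the relation `p • α + q • β + e₁ • u = e₂ • u`. Hence the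
girth is at least `g` as soon as no such relation (and no `m • u = 0`) is shorter than `g`, and
then a relation `k • u + m • β = 0` with `k + m = g` is traced by a `g`-cycle. For `g = 2a` take
`ℤ/3a × ℤ/a` with `u = (1,0)`, `α = (1,1)`, `β = (2,1)`; for `g = 2a + 1` take `ℤ/(a+1)(3a+1)`
with `u = 1`, `α = 3a + 2`, `β = 3a + 3`.
-/

open Finset

theorem Finset.exists_sum_eq_nsmul_add_nsmul {ι A : Type*} [AddCommMonoid A] {s : Finset ι}
    {d : ι → A} {x y : A} (h : ∀ i ∈ s, d i = x ∨ d i = y) :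
    ∃ k l : ℕ, k + l = #s ∧ ∑ i ∈ s, d i = k • x + l • y := by
  classical
  induction s using Finset.induction_on with
  | empty => exact ⟨0, 0, by simp⟩
  | insert j s hj ih =>
    obtain ⟨k, l, hkl, hsum⟩ := ih fun i hi => h i (mem_insert_of_mem hi)
    rw [sum_insert hj, card_insert_of_notMem hj, hsum]
    rcases h j (mem_insert_self j s) with hx | hy
    · exact ⟨k + 1, l, by omega, by rw [hx, succ_nsmul]; abel⟩
    · exact ⟨k, l + 1, by omega, by rw [hy, succ_nsmul]; abel⟩

namespace ZMod

theorem eq_of_natCast_eq {n x y : ℕ} (hx : x < n) (hy : y < n) (h : (x : ZMod n) = y) :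
    x = y := by
  simpa [Nat.mod_eq_of_lt hx, Nat.mod_eq_of_lt hy] using (natCast_eq_natCast_iff' x y n).mp h

theorem sum_sub_add_one_eq_zero {A : Type*} [AddCommGroup A] {n : ℕ} [NeZero n]
    (f : ZMod n → A) : ∑ i, (f (i + 1) - f i) = 0 := by
  rw [sum_sub_distrib, ← Equiv.sum_comp (Equiv.addRight 1) f]
  simp only [Equiv.coe_addRight, sub_self]

theorem apply_eq_apply_zero_of_add_one {X : Type*} {n : ℕ} [NeZero n] {f : ZMod n → X}
    (h : ∀ i, f (i + 1) = f i) (i : ZMod n) : f i = f 0 := by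
  rw [← natCast_zmod_val i]
  induction i.val with
  | zero => rw [Nat.cast_zero]
  | succ k ih => rw [Nat.cast_succ, h, ih]

end ZMod

namespace MixedGraph

variable {V : Type*} {G : MixedGraph V}

theorem exists_mixedCycle_of_injOn {g : ℕ} (hg : 3 ≤ g) (w : ℕ → V) (hclose : w g = w 0)
    (hstep : ∀ i < g, G.Arc (w i) (w (i + 1)) ∨ G.Edge (w i) (w (i + 1)))
    (hinj : Set.InjOn w (Set.Iio g)) :
    ∃ c : MixedCycle G, c.len = g := by
  classical
  have : Fact (1 < g) := ⟨by omega⟩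
  have hsucc (i : ZMod g) : w (i + 1).val = w (i.val + 1) := by
    rw [ZMod.val_add, ZMod.val_one]
    rcases Nat.lt_or_ge (i.val + 1) g with h | h
    · rw [Nat.mod_eq_of_lt h]
    · rw [show i.val + 1 = g by have := ZMod.val_lt i; omega, Nat.mod_self, hclose]
  have vinj : ∀ i j : ZMod g, w i.val = w j.val → i = j := fun i j h =>
    ZMod.val_injective g (hinj (ZMod.val_lt i) (ZMod.val_lt j) h)
  refine ⟨⟨g, by omega, fun i => w i.val, fun i => decide (G.Arc (w i.val) (w (i + 1).val)),
    fun i h => of_decide_eq_true h, fun i h => ?_, fun i j _ _ h _ => vinj i j h, ?_⟩, rfl⟩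
  · rw [hsucc] at h ⊢
    exact (hstep _ (ZMod.val_lt i)).resolve_left (of_decide_eq_false h)
  · rintro i j - - (⟨h, -⟩ | ⟨h₁, h₂⟩)
    · exact vinj i j h
    · have h₁ := vinj _ _ h₁
      have h₂ := vinj _ _ h₂
      have h2 : ((2 : ℕ) : ZMod g) = 0 := by push_cast; linear_combination h₂ - h₁
      have := Nat.le_of_dvd two_pos ((ZMod.natCast_eq_zero_iff 2 g).mp h2)
      omega

variable {A : Type*} [AddCommGroup A]

def cayley (u α β : A) (hu : u ≠ 0) (hα : α ≠ 0) (hβ : β ≠ 0) : MixedGraph A where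
  Edge x y := y = x + u ∨ x = y + u
  Arc x y := y = x + α ∨ y = x + β
  edge_symm h := h.symm
  edge_irrefl x h := hu (by rcases h with h | h <;> simpa using h.symm)
  arc_irrefl x h := by
    rcases h with h | h
    · exact hα (by simpa using h.symm)
    · exact hβ (by simpa using h.symm)

section cayley

variable {u α β : A} {hu : u ≠ 0} {hα : α ≠ 0} {hβ : β ≠ 0}

theorem cayley_card_edge (h2u : u ≠ -u) (x : A) :
    Nat.card {y | (cayley u α β hu hα hβ).Edge x y} = 2 := by
  have : {y | (cayley u α β hu hα hβ).Edge x y} = {x + u, x - u} := by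
    ext y
    simp only [cayley, Set.mem_ofPred_eq, Set.mem_insert_iff, Set.mem_singleton_iff,
      eq_sub_iff_add_eq, eq_comm (a := x)]
  rw [this, Nat.card_coe_set_eq, Set.ncard_pair]
  rwa [Ne, sub_eq_add_neg, add_right_inj]

theorem cayley_card_arc (hαβ : α ≠ β) (x : A) :
    Nat.card {y | (cayley u α β hu hα hβ).Arc x y} = 2 := by
  have : {y | (cayley u α β hu hα hβ).Arc x y} = {x + α, x + β} := rfl
  rw [this, Nat.card_coe_set_eq, Set.ncard_pair]
  rwa [Ne, add_right_inj]

end cayley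

end MixedGraph

namespace MixedCycle

instance {V : Type*} {G : MixedGraph V} (c : MixedCycle G) : NeZero c.len := ⟨c.len_pos.ne'⟩

variable {A : Type*} [AddCommGroup A]

def step {G : MixedGraph A} (c : MixedCycle G) (i : ZMod c.len) : A := c.vert (i + 1) - c.vert i

theorem sum_step {G : MixedGraph A} (c : MixedCycle G) : ∑ i, c.step i = 0 :=
  ZMod.sum_sub_add_one_eq_zero c.vert

section cayley

open MixedGraph

variable {u α β : A} {hu : u ≠ 0} {hα : α ≠ 0} {hβ : β ≠ 0}
  (c : MixedCycle (cayley u α β hu hα hβ))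

theorem cayley_step_of_useArc {i : ZMod c.len} (h : c.useArc i = true) :
    c.step i = α ∨ c.step i = β := by
  rcases c.step_arc i h with h | h <;> simp [step, h]

theorem cayley_step_of_not_useArc {i : ZMod c.len} (h : c.useArc i = false) :
    c.step i = u ∨ c.step i = -u := by
  rcases c.step_edge i h with h | h <;> simp [step, h]

theorem cayley_step_add_one {i : ZMod c.len} (hi : c.useArc i = false)
    (hi' : c.useArc (i + 1) = false) : c.step (i + 1) = c.step i := by
  by_cases hback : c.vert i = c.vert (i + 1 + 1)
  · rw [← c.edge_once i (i + 1) hi hi' (Or.inr ⟨hback, rfl⟩)]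
  have hsum : c.step (i + 1) + c.step i = c.vert (i + 1 + 1) - c.vert i := by
    simp only [step]; abel
  rcases c.cayley_step_of_not_useArc hi with h | h <;>
    rcases c.cayley_step_of_not_useArc hi' with h' | h'
  · rw [h, h']
  · exact absurd (sub_eq_zero.mp (by rw [← hsum, h, h']; abel)).symm hback
  · exact absurd (sub_eq_zero.mp (by rw [← hsum, h, h']; abel)).symm hback
  · rw [h, h']

theorem cayley_len_nsmul_eq_zero (h : ∀ i, c.useArc i = false) : c.len • u = 0 := by
  have hconst := ZMod.apply_eq_apply_zero_of_add_one
    fun i => c.cayley_step_add_one (h i) (h (i + 1))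
  have h0 : c.len • c.step 0 = 0 := by
    rw [← c.sum_step, Finset.sum_congr rfl fun i _ => hconst i, Finset.sum_const,
      Finset.card_univ, ZMod.card]
  rcases c.cayley_step_of_not_useArc (h 0) with h' | h' <;> simpa [h'] using h0

theorem cayley_exists_nsmul_eq (h : ∃ i, c.useArc i = true) :
    ∃ p q e₁ e₂ : ℕ, 0 < p + q ∧ p + q + e₁ + e₂ = c.len ∧
      p • α + q • β + e₁ • u = e₂ • u := by
  classical
  obtain ⟨p, q, hpq, harc⟩ := exists_sum_eq_nsmul_add_nsmul
    (s := {i | c.useArc i = true}) fun i hi => c.cayley_step_of_useArc (mem_filter.mp hi).2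
  obtain ⟨e₁, e₂, he, hedge⟩ := exists_sum_eq_nsmul_add_nsmul
    (s := {i | ¬ c.useArc i = true}) fun i hi =>
      c.cayley_step_of_not_useArc (by simpa using (mem_filter.mp hi).2)
  refine ⟨p, q, e₁, e₂, ?_, ?_, ?_⟩
  · obtain ⟨i, hi⟩ := h
    exact hpq ▸ card_pos.mpr ⟨i, by simpa using hi⟩
  · rw [add_assoc, he, hpq, card_filter_add_card_filter_not, card_univ, ZMod.card]
  · have := c.sum_step
    rw [← sum_filter_add_sum_filter_not univ (c.useArc · = true), harc, hedge] at this
    rw [← sub_eq_zero, ← this, smul_neg]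
    abel

theorem cayley_le_len {g : ℕ} (hord : ∀ m, 0 < m → m • u = 0 → g ≤ m)
    (hmix : ∀ p q e₁ e₂ : ℕ, 0 < p + q → p • α + q • β + e₁ • u = e₂ • u →
      g ≤ p + q + e₁ + e₂) : g ≤ c.len := by
  by_cases h : ∃ i, c.useArc i = true
  · obtain ⟨p, q, e₁, e₂, hpq, hlen, hsum⟩ := c.cayley_exists_nsmul_eq h
    exact hlen ▸ hmix p q e₁ e₂ hpq hsum
  · simp only [not_exists, Bool.not_eq_true] at h
    exact hord _ c.len_pos (c.cayley_len_nsmul_eq_zero h)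

end cayley

end MixedCycle

namespace MixedGraph

variable {A : Type*} [AddCommGroup A] {u α β : A} {g : ℕ}

theorem cayley_exists_mixedCycle_len {hu : u ≠ 0} {hα : α ≠ 0} {hβ : β ≠ 0} {k m : ℕ}
    (hg : 3 ≤ g) (hkm : k + m = g) (hclose : k • u + m • β = 0)
    (hord : ∀ m, 0 < m → m • u = 0 → g ≤ m)
    (hmix : ∀ p q e₁ e₂ : ℕ, 0 < p + q → p • α + q • β + e₁ • u = e₂ • u →
      g ≤ p + q + e₁ + e₂) :
    ∃ c : MixedCycle (cayley u α β hu hα hβ), c.len = g := by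
  set w : ℕ → A := fun i => min i k • u + (i - k) • β
  have hw {i j : ℕ} (hij : i ≤ j) : ∃ e q, e + q = j - i ∧ w j = w i + e • u + q • β := by
    obtain ⟨e, he⟩ := Nat.exists_eq_add_of_le (min_le_min_right k hij)
    obtain ⟨q, hq⟩ := Nat.exists_eq_add_of_le (Nat.sub_le_sub_right hij k)
    refine ⟨e, q, by omega, ?_⟩
    simp only [w, he, hq, add_nsmul]
    abel
  refine exists_mixedCycle_of_injOn hg w ?_ (fun i _ => ?_) ?_
  · simp [w, ← hkm, hclose]
  · by_cases hik : i < k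
    · have h₁ : min (i + 1) k = min i k + 1 := by omega
      have h₂ : i + 1 - k = i - k := by omega
      refine Or.inr (Or.inl ?_)
      simp only [w, h₁, h₂, succ_nsmul]
      abel
    · have h₁ : min (i + 1) k = min i k := by omega
      have h₂ : i + 1 - k = i - k + 1 := by omega
      refine Or.inl (Or.inr ?_)
      simp only [w, h₁, h₂, succ_nsmul]
      abel
  -- a repeated vertex would give a relation shorter than `g`
  · have key {i j : ℕ} (hij : i < j) (hj : j < g) : w i ≠ w j := by
      obtain ⟨e, q, heq, hwj⟩ := hw hij.le
      intro hwij
      rw [← hwij, add_assoc, left_eq_add] at hwj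
      rcases Nat.eq_zero_or_pos q with rfl | hq
      · have := hord e (by omega) (by simpa using hwj)
        omega
      · have := hmix 0 q e 0 (by omega) (by simpa [add_comm] using hwj)
        omega
    intro i hi j hj hij
    by_contra hne
    rcases Nat.lt_or_gt_of_ne hne with h | h
    · exact key h hj hij
    · exact key h hi hij.symm

theorem exists_isMixedRZG_of_generators {k m : ℕ} (hg : 3 ≤ g) (hαβ : α ≠ β) (hkm : k + m = g)
    (hclose : k • u + m • β = 0) (hord : ∀ m, 0 < m → m • u = 0 → g ≤ m)
    (hmix : ∀ p q e₁ e₂ : ℕ, 0 < p + q → p • α + q • β + e₁ • u = e₂ • u →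
      g ≤ p + q + e₁ + e₂) :
    ∃ G : MixedGraph A, IsMixedRZG G 2 2 g := by
  have hu : u ≠ 0 := fun h => by have := hord 1 one_pos (by simp [h]); omega
  have hα : α ≠ 0 := fun h => by have := hmix 1 0 0 0 one_pos (by simp [h]); omega
  have hβ : β ≠ 0 := fun h => by have := hmix 0 1 0 0 one_pos (by simp [h]); omega
  have h2u : u ≠ -u := fun h => by
    have := hord 2 two_pos (by rw [two_nsmul]; nth_rw 2 [h]; exact add_neg_cancel u)
    omega
  exact ⟨cayley u α β hu hα hβ, cayley_card_edge h2u, cayley_card_arc hαβ,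
    cayley_exists_mixedCycle_len hg hkm hclose hord hmix, fun c => c.cayley_le_len hord hmix⟩

end MixedGraph

theorem exists_isMixedRZG_two_mul {a : ℕ} (ha : 3 ≤ a) :
    ∃ G : MixedGraph (ZMod (3 * a) × ZMod a), IsMixedRZG G 2 2 (2 * a) := by
  refine MixedGraph.exists_isMixedRZG_of_generators (u := (1, 0)) (α := (1, 1)) (β := (2, 1))
    (k := a) (m := a) (by omega) ?_ (by omega) ?_ ?_ ?_
  · intro h
    have := ZMod.eq_of_natCast_eq (n := 3 * a) (x := 1) (y := 2) (by omega) (by omega)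
      (by exact_mod_cast congrArg Prod.fst h)
    omega
  · ext
    · simp only [Prod.smul_mk, nsmul_eq_mul, mul_one, Prod.mk_add_mk, Prod.fst_zero]
      rw [← ZMod.natCast_self (3 * a)]
      push_cast
      ring
    · simp
  · intro m hm h
    have : ((m : ℕ) : ZMod (3 * a)) = 0 := by simpa using congrArg Prod.fst h
    have := Nat.le_of_dvd hm ((ZMod.natCast_eq_zero_iff _ _).mp this)
    omega
  · intro p q e₁ e₂ hpq h
    have h₁ : ((p + 2 * q + e₁ : ℕ) : ZMod (3 * a)) = e₂ := by
      have := congrArg Prod.fst h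
      simp only [Prod.smul_mk, nsmul_eq_mul, mul_one, Prod.mk_add_mk] at this
      push_cast
      linear_combination this
    have h₂ : ((p + q : ℕ) : ZMod a) = 0 := by
      simpa using congrArg Prod.snd h
    by_contra! hlen
    -- the second coordinate forces `p + q = a`, and then the first one cannot vanish
    have hpq_eq : p + q = a := Nat.eq_of_dvd_of_lt_two_mul hpq.ne'
      ((ZMod.natCast_eq_zero_iff _ _).mp h₂) (by omega)
    have := ZMod.eq_of_natCast_eq (by omega) (by omega) h₁
    omega

theorem exists_isMixedRZG_two_mul_add_one {a : ℕ} (ha : 2 ≤ a) :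
    ∃ G : MixedGraph (ZMod ((a + 1) * (3 * a + 1))), IsMixedRZG G 2 2 (2 * a + 1) := by
  set n := (a + 1) * (3 * a + 1) with hn
  have h3a : 3 * a + 3 < n := by nlinarith
  refine MixedGraph.exists_isMixedRZG_of_generators (u := 1) (α := ((3 * a + 2 : ℕ) : ZMod n))
    (β := ((3 * a + 3 : ℕ) : ZMod n)) (k := a + 1) (m := a) (by omega) ?_ (by omega) ?_ ?_ ?_
  · intro h
    have := ZMod.eq_of_natCast_eq (by omega) (by omega) h
    omega
  · rw [← ZMod.natCast_self n, hn]
    push_cast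
    ring
  · intro m hm h
    have := Nat.le_of_dvd hm ((ZMod.natCast_eq_zero_iff _ _).mp (by simpa using h))
    omega
  · intro p q e₁ e₂ hpq h
    by_contra! hlen
    -- `x = (p + q)(3a + 2) + q + e₁` lies strictly between `e₂` and `e₂ + 2n`, so `x = e₂ + n`,
    -- which is too large if `p + q ≤ a` and too small if `p + q > a`
    have hx : (((p + q) * (3 * a + 2) + q + e₁ : ℕ) : ZMod n) = e₂ := by
      simp only [nsmul_eq_mul, mul_one] at h
      push_cast at h ⊢
      linear_combination h
    have hlt : e₂ < (p + q) * (3 * a + 2) + q + e₁ := by nlinarith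
    have hdvd := (Nat.modEq_iff_dvd' hlt.le).mp ((ZMod.natCast_eq_natCast_iff _ _ _).mp hx).symm
    have hxn : (p + q) * (3 * a + 2) + q + e₁ = e₂ + n := by
      suffices (p + q) * (3 * a + 2) + q + e₁ - e₂ = n by omega
      refine Nat.eq_of_dvd_of_lt_two_mul (by omega) hdvd ?_
      have : (p + q) * (3 * a + 2) ≤ 2 * a * (3 * a + 2) := Nat.mul_le_mul_right _ (by omega)
      have : (p + q) * (3 * a + 2) + q + e₁ < 2 * n := by nlinarith
      omega
    rcases le_or_gt (p + q) a with hs | hs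
    · have : (p + q) * (3 * a + 2) ≤ a * (3 * a + 2) := Nat.mul_le_mul_right _ hs
      nlinarith
    · have : (a + 1) * (3 * a + 2) ≤ (p + q) * (3 * a + 2) := Nat.mul_le_mul_right _ hs
      nlinarith

/-- For every `g ≥ 5` there is a `(2,2,g)`-graph with `⌈g/2⌉ * ⌊3g/2⌋` vertices;
this number equals `3g^2/4` for even `g` and `(3g^2 + 2g - 1)/4` for odd `g`. -/
theorem f_2_2_g_upper (g : ℕ) (hg : 5 ≤ g) :
    (∃ (V : Type) (_ : Fintype V) (G : MixedGraph V),
      Nat.card V = (g + 1) / 2 * (3 * g / 2) ∧ IsMixedRZG G 2 2 g) ∧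
    (Even g → (g + 1) / 2 * (3 * g / 2) = 3 * g ^ 2 / 4) ∧
    (Odd g → (g + 1) / 2 * (3 * g / 2) = (3 * g ^ 2 + 2 * g - 1) / 4) := by
  obtain ⟨a, rfl | rfl⟩ := Nat.even_or_odd' g
  · have h₁ : (2 * a + 1) / 2 = a := by omega
    have h₂ : 3 * (2 * a) / 2 = 3 * a := by omega
    obtain ⟨G, hG⟩ := exists_isMixedRZG_two_mul (a := a) (by omega)
    have : NeZero a := ⟨by omega⟩
    have : NeZero (3 * a) := ⟨by omega⟩
    refine ⟨⟨_, inferInstance, G, ?_, hG⟩, fun _ => ?_, fun h => absurd h (by simp)⟩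
    · rw [h₁, h₂, Nat.card_prod, Nat.card_zmod, Nat.card_zmod, mul_comm]
    · rw [h₁, h₂, show 3 * (2 * a) ^ 2 = 4 * (a * (3 * a)) by ring,
        Nat.mul_div_cancel_left _ four_pos]
  · have h₁ : (2 * a + 1 + 1) / 2 = a + 1 := by omega
    have h₂ : 3 * (2 * a + 1) / 2 = 3 * a + 1 := by omega
    obtain ⟨G, hG⟩ := exists_isMixedRZG_two_mul_add_one (a := a) (by omega)
    refine ⟨⟨_, inferInstance, G, ?_, hG⟩, fun h => absurd h (by simp), fun _ => ?_⟩
    · rw [h₁, h₂, Nat.card_zmod]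
    · rw [h₁, h₂, Nat.sub_eq_of_eq_add (show 3 * (2 * a + 1) ^ 2 + 2 * (2 * a + 1) =
        4 * ((a + 1) * (3 * a + 1)) + 1 by ring), Nat.mul_div_cancel_left _ four_pos]
end

section
/- Every (5,1,6)-graph has at least 66 vertices, and there exists a (5,1,6)-graph with exactly 72 vertices. -/
set_option linter.unusedSectionVars false

namespace LB
variable {V : Type*} {G : MixedGraph V}
def stp (G : MixedGraph V) (x y : V) : Bool → Prop
  | true => G.Arc x y
  | false => G.Edge x y
lemma build (k : ℕ) (hk : 3 ≤ k) (hk' : k ≤ 5) (v : ZMod k → V) (b : ZMod k → Bool)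
    (hinj : Function.Injective v)
    (hs : ∀ i, stp G (v i) (v (i + 1)) (b i))
    (hg : ∀ c : MixedCycle G, 6 ≤ c.len) : False := by
  have h2 : (2 : ZMod k) ≠ 0 := by
    haveI : NeZero k := ⟨by omega⟩
    intro h
    have h2' : ((2 : ℕ) : ZMod k) = 0 := by exact_mod_cast h
    have hdvd := (ZMod.natCast_eq_zero_iff 2 k).mp h2'
    have := Nat.le_of_dvd (by norm_num) hdvd
    omega
  have h6 : 6 ≤ k := by
    refine hg ⟨k, by omega, v, b, ?_, ?_, ?_, ?_⟩
    · intro i h; have := hs i; rw [h] at this; exact this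
    · intro i h; have := hs i; rw [h] at this; exact this
    · intro i j _ _ h _; exact hinj h
    · intro i j _ _ h
      rcases h with ⟨h1, _⟩ | ⟨h1, h2'⟩
      · exact hinj h1
      · exfalso
        have e1 : i = j + 1 := hinj h1
        have e2 : i + 1 = j := hinj h2'
        rw [e1] at e2
        have e3 : j + (1 + 1) = j + 0 := by rw [add_zero, ← add_assoc]; exact e2
        have e4 := add_left_cancel e3
        exact h2 (by rw [← one_add_one_eq_two]; exact e4)
  omega
lemma noc2a (hg : ∀ c : MixedCycle G, 6 ≤ c.len) {a b : V}
    (h1 : G.Arc a b) (h2 : G.Arc b a) : False := by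
  have hab : a ≠ b := by rintro rfl; exact G.arc_irrefl a h1
  have h6 : (6:ℕ) ≤ 2 := by
    refine hg ⟨2, by omega, ![a,b], ![true, true], ?_, ?_, ?_, ?_⟩
    · intro i _
      fin_cases i
      · exact h1
      · exact h2
    · intro i hi; fin_cases i <;> simp_all
    · intro i j _ _ hv _
      fin_cases i <;> fin_cases j <;> simp_all <;> rfl
    · intro i j hi _ _; fin_cases i <;> simp_all
  omega
lemma noc2e (hg : ∀ c : MixedCycle G, 6 ≤ c.len) {a b : V}
    (h1 : G.Arc a b) (h2 : G.Edge a b) : False := by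
  have hab : a ≠ b := by rintro rfl; exact G.arc_irrefl a h1
  have h6 : (6:ℕ) ≤ 2 := by
    refine hg ⟨2, by omega, ![a,b], ![true, false], ?_, ?_, ?_, ?_⟩
    · intro i hi
      fin_cases i
      · exact h1
      · simp at hi
    · intro i hi
      fin_cases i
      · simp at hi
      · exact G.edge_symm h2
    · intro i j hi hj _ _; fin_cases i <;> fin_cases j <;> simp_all <;> rfl
    · intro i j hi hj _; fin_cases i <;> fin_cases j <;> simp_all <;> rfl
  omega
lemma noc3 (hg : ∀ c : MixedCycle G, 6 ≤ c.len) {a0 a1 a2 : V} (b0 b1 b2 : Bool)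
    (h01 : a0 ≠ a1) (h02 : a0 ≠ a2) (h12 : a1 ≠ a2)
    (s0 : stp G a0 a1 b0) (s1 : stp G a1 a2 b1) (s2 : stp G a2 a0 b2) : False := by
  refine build 3 (by norm_num) (by norm_num) ![a0,a1,a2] ![b0,b1,b2] ?_ ?_ hg
  · intro x y h
    fin_cases x <;> fin_cases y <;>
      first
        | rfl
        | exact absurd h h01 | exact absurd h h02 | exact absurd h h12
        | exact absurd h.symm h01 | exact absurd h.symm h02 | exact absurd h.symm h12
  · intro i
    fin_cases i
    · exact s0
    · exact s1
    · exact s2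
lemma noc4 (hg : ∀ c : MixedCycle G, 6 ≤ c.len) {a0 a1 a2 a3 : V} (b0 b1 b2 b3 : Bool)
    (h01 : a0 ≠ a1) (h02 : a0 ≠ a2) (h03 : a0 ≠ a3)
    (h12 : a1 ≠ a2) (h13 : a1 ≠ a3) (h23 : a2 ≠ a3)
    (s0 : stp G a0 a1 b0) (s1 : stp G a1 a2 b1) (s2 : stp G a2 a3 b2)
    (s3 : stp G a3 a0 b3) : False := by
  refine build 4 (by norm_num) (by norm_num) ![a0,a1,a2,a3] ![b0,b1,b2,b3] ?_ ?_ hg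
  · intro x y h
    fin_cases x <;> fin_cases y <;>
      first
        | rfl
        | exact absurd h h01 | exact absurd h h02 | exact absurd h h03
        | exact absurd h h12 | exact absurd h h13 | exact absurd h h23
        | exact absurd h.symm h01 | exact absurd h.symm h02 | exact absurd h.symm h03
        | exact absurd h.symm h12 | exact absurd h.symm h13 | exact absurd h.symm h23
  · intro i
    fin_cases i
    · exact s0
    · exact s1
    · exact s2
    · exact s3
lemma noc5 (hg : ∀ c : MixedCycle G, 6 ≤ c.len) {a0 a1 a2 a3 a4 : V}
    (b0 b1 b2 b3 b4 : Bool)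
    (h01 : a0 ≠ a1) (h02 : a0 ≠ a2) (h03 : a0 ≠ a3) (h04 : a0 ≠ a4)
    (h12 : a1 ≠ a2) (h13 : a1 ≠ a3) (h14 : a1 ≠ a4)
    (h23 : a2 ≠ a3) (h24 : a2 ≠ a4) (h34 : a3 ≠ a4)
    (s0 : stp G a0 a1 b0) (s1 : stp G a1 a2 b1) (s2 : stp G a2 a3 b2)
    (s3 : stp G a3 a4 b3) (s4 : stp G a4 a0 b4) : False := by
  refine build 5 (by norm_num) (by norm_num) ![a0,a1,a2,a3,a4] ![b0,b1,b2,b3,b4] ?_ ?_ hg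
  · intro x y h
    fin_cases x <;> fin_cases y <;>
      first
        | rfl
        | exact absurd h h01 | exact absurd h h02 | exact absurd h h03 | exact absurd h h04
        | exact absurd h h12 | exact absurd h h13 | exact absurd h h14
        | exact absurd h h23 | exact absurd h h24 | exact absurd h h34
        | exact absurd h.symm h01 | exact absurd h.symm h02 | exact absurd h.symm h03
        | exact absurd h.symm h04
        | exact absurd h.symm h12 | exact absurd h.symm h13 | exact absurd h.symm h14
        | exact absurd h.symm h23 | exact absurd h.symm h24 | exact absurd h.symm h34
  · intro i
    fin_cases i
    · exact s0
    · exact s1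
    · exact s2
    · exact s3
    · exact s4

/-! ### walk predicates -/
def W2 (G : MixedGraph V) (a b : V) : Prop := ∃ c, G.Edge a c ∧ G.Edge c b
def W3 (G : MixedGraph V) (a b : V) : Prop := ∃ c d, G.Edge a c ∧ G.Edge c d ∧ G.Edge d b
def W4 (G : MixedGraph V) (a b : V) : Prop :=
  ∃ c d e, G.Edge a c ∧ G.Edge c d ∧ G.Edge d e ∧ G.Edge e b
def Far3 (G : MixedGraph V) (a b : V) : Prop := a ≠ b ∧ ¬G.Edge a b ∧ ¬W2 G a b
def Far4 (G : MixedGraph V) (a b : V) : Prop := Far3 G a b ∧ ¬W3 G a b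
def Far5 (G : MixedGraph V) (a b : V) : Prop := Far4 G a b ∧ ¬W4 G a b

lemma W2_symm {a b : V} (h : W2 G a b) : W2 G b a := by
  obtain ⟨c, h1, h2⟩ := h; exact ⟨c, G.edge_symm h2, G.edge_symm h1⟩
lemma W3_symm {a b : V} (h : W3 G a b) : W3 G b a := by
  obtain ⟨c, d, h1, h2, h3⟩ := h
  exact ⟨d, c, G.edge_symm h3, G.edge_symm h2, G.edge_symm h1⟩
lemma W4_symm {a b : V} (h : W4 G a b) : W4 G b a := by
  obtain ⟨c, d, e, h1, h2, h3, h4⟩ := h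
  exact ⟨e, d, c, G.edge_symm h4, G.edge_symm h3, G.edge_symm h2, G.edge_symm h1⟩
lemma Far3.symm {a b : V} (h : Far3 G a b) : Far3 G b a :=
  ⟨h.1.symm, fun he => h.2.1 (G.edge_symm he), fun hw => h.2.2 (W2_symm hw)⟩
lemma Far4.symm {a b : V} (h : Far4 G a b) : Far4 G b a :=
  ⟨h.1.symm, fun hw => h.2 (W3_symm hw)⟩
lemma Far5.symm {a b : V} (h : Far5 G a b) : Far5 G b a :=
  ⟨h.1.symm, fun hw => h.2 (W4_symm hw)⟩
lemma Far4.far3 {a b : V} (h : Far4 G a b) : Far3 G a b := h.1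
lemma Far5.far4 {a b : V} (h : Far5 G a b) : Far4 G a b := h.1
lemma Far3.ne {a b : V} (h : Far3 G a b) : a ≠ b := h.1
lemma Far3.nE {a b : V} (h : Far3 G a b) : ¬G.Edge a b := h.2.1
lemma Far3.nW2 {a b : V} (h : Far3 G a b) : ¬W2 G a b := h.2.2

section Girth
variable (hg : ∀ c : MixedCycle G, 6 ≤ c.len)
include hg

/-- An arc forces undirected distance ≥ 5 between its endpoints. -/
lemma arc_far5 {a b : V} (hA : G.Arc a b) : Far5 G b a := by
  have hab : a ≠ b := by rintro rfl; exact G.arc_irrefl a hA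
  have nE : ¬G.Edge b a := fun h => noc2e hg hA (G.edge_symm h)
  have nW2 : ¬W2 G b a := by
    rintro ⟨c, hbc, hca⟩
    have hbc' : b ≠ c := by rintro rfl; exact G.edge_irrefl b hbc
    have hac : a ≠ c := by rintro rfl; exact nE hbc
    exact noc3 hg true false false hab hac hbc' hA hbc hca
  have nW3 : ¬W3 G b a := by
    rintro ⟨c, d, hbc, hcd, hda⟩
    by_cases hbd : b = d
    · exact nE (hbd ▸ hda)
    by_cases hca : c = a
    · exact nE (hca ▸ hbc)
    have hbc' : b ≠ c := by rintro rfl; exact G.edge_irrefl b hbc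
    have hcd' : c ≠ d := by rintro rfl; exact G.edge_irrefl c hcd
    have hda' : d ≠ a := by rintro rfl; exact G.edge_irrefl d hda
    exact noc4 hg true false false false hab (Ne.symm hca) hda'.symm hbc' hbd hcd'
      hA hbc hcd hda
  have nW4 : ¬W4 G b a := by
    rintro ⟨c, d, e, hbc, hcd, hde, hea⟩
    by_cases hbd : b = d
    · exact nW2 ⟨e, hbd ▸ hde, hea⟩
    by_cases hbe : b = e
    · exact nE (hbe ▸ hea)
    by_cases hce : c = e
    · exact nW2 ⟨c, hbc, hce ▸ hea⟩
    by_cases hca : c = a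
    · exact nE (hca ▸ hbc)
    by_cases hda : d = a
    · exact nW2 ⟨c, hbc, hda ▸ hcd⟩
    have hbc' : b ≠ c := by rintro rfl; exact G.edge_irrefl b hbc
    have hcd' : c ≠ d := by rintro rfl; exact G.edge_irrefl c hcd
    have hde' : d ≠ e := by rintro rfl; exact G.edge_irrefl d hde
    have hea' : e ≠ a := by rintro rfl; exact G.edge_irrefl e hea
    exact noc5 hg true false false false false hab (Ne.symm hca) (Ne.symm hda) hea'.symm
      hbc' hbd hbe hcd' hce hde' hA hbc hcd hde hea
  exact ⟨⟨⟨fun h => hab h.symm, nE, nW2⟩, nW3⟩, nW4⟩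

/-- A 2-chain of arcs forces distance ≥ 4. -/
lemma chain2_far4 {a b c : V} (hA1 : G.Arc a b) (hA2 : G.Arc b c) : Far4 G c a := by
  have fab := arc_far5 hg hA1
  have fbc := arc_far5 hg hA2
  have hca : c ≠ a := by rintro rfl; exact noc2a hg hA1 hA2
  have hab : a ≠ b := fun h => fab.far4.far3.ne h.symm
  have hbc : b ≠ c := fun h => fbc.far4.far3.ne h.symm
  have nE : ¬G.Edge c a := fun h =>
    noc3 hg true true false hab (Ne.symm hca) hbc hA1 hA2 h
  have nW2 : ¬W2 G c a := by
    rintro ⟨d, hcd, hda⟩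
    have hbd : b ≠ d := by rintro rfl; exact fab.far4.far3.nE hda
    have hcd' : c ≠ d := by rintro rfl; exact G.edge_irrefl c hcd
    have hda' : d ≠ a := by rintro rfl; exact G.edge_irrefl d hda
    exact noc4 hg true true false false hab (Ne.symm hca) hda'.symm hbc hbd hcd'
      hA1 hA2 hcd hda
  have nW3 : ¬W3 G c a := by
    rintro ⟨d, e, hcd, hde, hea⟩
    by_cases hbd : b = d
    · exact fbc.far4.far3.nE (hbd ▸ hcd)
    by_cases hbe : b = e
    · exact fab.far4.far3.nE (hbe ▸ hea)
    by_cases had : a = d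
    · exact nE (had ▸ hcd)
    by_cases hce : c = e
    · exact nE (hce ▸ hea)
    have hcd' : c ≠ d := by rintro rfl; exact G.edge_irrefl c hcd
    have hde' : d ≠ e := by rintro rfl; exact G.edge_irrefl d hde
    have hea' : e ≠ a := by rintro rfl; exact G.edge_irrefl e hea
    exact noc5 hg true true false false false hab (Ne.symm hca) had hea'.symm
      hbc hbd hbe hcd' hce hde' hA1 hA2 hcd hde hea
  exact ⟨⟨hca, nE, nW2⟩, nW3⟩

/-- A 3-chain of arcs forces distance ≥ 3. -/
lemma chain3_far3 {a b c d : V} (hA1 : G.Arc a b) (hA2 : G.Arc b c) (hA3 : G.Arc c d) :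
    Far3 G d a := by
  have fab := arc_far5 hg hA1
  have fbc := arc_far5 hg hA2
  have fcd := arc_far5 hg hA3
  have fca := chain2_far4 hg hA1 hA2
  have fdb := chain2_far4 hg hA2 hA3
  have hab : a ≠ b := fun h => fab.far4.far3.ne h.symm
  have hbc : b ≠ c := fun h => fbc.far4.far3.ne h.symm
  have hcd : c ≠ d := fun h => fcd.far4.far3.ne h.symm
  have hac : a ≠ c := fun h => fca.far3.ne h.symm
  have hbd : b ≠ d := fun h => fdb.far3.ne h.symm
  have hda : d ≠ a := by
    rintro rfl
    exact noc3 hg true true true hab hac hbc hA1 hA2 hA3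
  have nE : ¬G.Edge d a := fun h =>
    noc4 hg true true true false hab hac (Ne.symm hda) hbc hbd hcd hA1 hA2 hA3 h
  have nW2 : ¬W2 G d a := by
    rintro ⟨e, hde, hea⟩
    by_cases hbe : b = e
    · exact fab.far4.far3.nE (hbe ▸ hea)
    by_cases hce : c = e
    · exact fcd.far4.far3.nE (hce ▸ hde)
    have hde' : d ≠ e := by rintro rfl; exact G.edge_irrefl d hde
    have hea' : e ≠ a := by rintro rfl; exact G.edge_irrefl e hea
    exact noc5 hg true true true false false hab hac (Ne.symm hda) hea'.symm
      hbc hbd hbe hcd hce hde' hA1 hA2 hA3 hde hea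
  exact ⟨hda, nE, nW2⟩

end Girth
variable {V : Type*} [Fintype V] {G : MixedGraph V}

attribute [local instance 10] Classical.propDecidable
attribute [local instance 10] Classical.decEq

open Classical in
/-- neighbour finset -/
noncomputable def nbF (G : MixedGraph V) (v : V) : Finset V :=
  {u | G.Edge v u}.toFinset

open Classical in
lemma mem_nbF {v u : V} : u ∈ nbF G v ↔ G.Edge v u := by
  simp [nbF]

open Classical in
/-- ball of radius 2 -/
noncomputable def ball (G : MixedGraph V) (x : V) : Finset V :=
  {x} ∪ nbF G x ∪ (nbF G x).biUnion (fun u => nbF G u \ {x})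

lemma mem_ball_imp {x w : V} (h : w ∈ ball G x) :
    w = x ∨ G.Edge x w ∨ W2 G x w := by
  simp only [ball, Finset.mem_union, Finset.mem_biUnion, Finset.mem_sdiff,
    Finset.mem_singleton, mem_nbF] at h
  rcases h with (h | h) | ⟨u, h1, h2, _⟩
  · exact Or.inl h
  · exact Or.inr (Or.inl h)
  · exact Or.inr (Or.inr ⟨u, h1, h2⟩)

section WithGirth
variable (hg : ∀ c : MixedCycle G, 6 ≤ c.len)
include hg

lemma not_mem_ball {x y : V} (h : Far3 G x y) : y ∉ ball G x := by
  intro hy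
  rcases mem_ball_imp hy with h1 | h1 | h1
  · exact h.ne h1.symm
  · exact h.nE h1
  · exact h.nW2 h1

lemma nb_disj_ball {x y : V} (h : Far4 G x y) : Disjoint (nbF G y) (ball G x) := by
  rw [Finset.disjoint_left]
  intro w hw hb
  have hyw : G.Edge y w := mem_nbF.mp hw
  rcases mem_ball_imp hb with rfl | h1 | ⟨u, h1, h2⟩
  · exact h.far3.nE (G.edge_symm hyw)
  · exact h.far3.nW2 ⟨w, h1, G.edge_symm hyw⟩
  · exact h.2 ⟨u, w, h1, h2, G.edge_symm hyw⟩

lemma ball_disj_ball {x y : V} (h : Far5 G x y) : Disjoint (ball G x) (ball G y) := by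
  rw [Finset.disjoint_left]
  intro w hx hy
  rcases mem_ball_imp hx with rfl | h1 | ⟨u, h1, h2⟩
  · exact not_mem_ball hg h.far4.far3.symm hy
  · rcases mem_ball_imp hy with rfl | h2 | ⟨u, h2, h3⟩
    · exact h.far4.far3.nE h1
    · exact h.far4.far3.nW2 ⟨w, h1, G.edge_symm h2⟩
    · exact h.far4.2 ⟨w, u, h1, G.edge_symm h3, G.edge_symm h2⟩
  · rcases mem_ball_imp hy with rfl | h3 | ⟨u', h3, h4⟩
    · exact h.far4.far3.nW2 ⟨u, h1, h2⟩
    · exact h.far4.2 ⟨u, w, h1, h2, G.edge_symm h3⟩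
    · exact h.2 ⟨u, w, u', h1, h2, G.edge_symm h4, G.edge_symm h3⟩

-- card of ball: ≥ / = 26 given degree 5 everywhere
lemma card_ball (hE5 : ∀ v : V, (nbF G v).card = 5) (x : V) :
    (ball G x).card = 26 := by
  have hx_nb : x ∉ nbF G x := fun h => G.edge_irrefl x (mem_nbF.mp h)
  have d1 : Disjoint ({x} : Finset V) (nbF G x) := by
    simp [Finset.disjoint_left, hx_nb]
  have d2 : Disjoint ({x} ∪ nbF G x) ((nbF G x).biUnion (fun u => nbF G u \ {x})) := by
    rw [Finset.disjoint_left]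
    intro w hw hb
    obtain ⟨u, hu, hw2⟩ := Finset.mem_biUnion.mp hb
    rw [Finset.mem_sdiff, Finset.mem_singleton] at hw2
    rcases Finset.mem_union.mp hw with h1 | h1
    · exact hw2.2 (Finset.mem_singleton.mp h1)
    · -- w ∈ nbF x and w ∈ nbF u, u ∈ nbF x : triangle x u w
      have hxu : G.Edge x u := mem_nbF.mp hu
      have huw : G.Edge u w := mem_nbF.mp hw2.1
      have hxw : G.Edge x w := mem_nbF.mp h1
      have hxu' : x ≠ u := by rintro rfl; exact G.edge_irrefl x hxu
      have huw' : u ≠ w := by rintro rfl; exact G.edge_irrefl u huw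
      have hxw' : x ≠ w := by rintro rfl; exact G.edge_irrefl x hxw
      exact noc3 hg false false false hxu' hxw' huw' hxu huw (G.edge_symm hxw)
  have hbi : ((nbF G x).biUnion (fun u => nbF G u \ {x})).card = 20 := by
    rw [Finset.card_biUnion]
    · have : ∀ u ∈ nbF G x, (nbF G u \ {x}).card = 4 := by
        intro u hu
        rw [Finset.card_sdiff_of_subset]
        · rw [hE5 u, Finset.card_singleton]
        · simp only [Finset.singleton_subset_iff, mem_nbF]
          exact G.edge_symm (mem_nbF.mp hu)
      rw [Finset.sum_congr rfl this, Finset.sum_const, hE5 x]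
      rfl
    · intro u hu u' hu' huu'
      rw [Function.onFun, Finset.disjoint_left]
      intro w hw hw'
      rw [Finset.mem_sdiff, Finset.mem_singleton] at hw hw'
      have hxu : G.Edge x u := mem_nbF.mp hu
      have hxu' : G.Edge x u' := mem_nbF.mp hu'
      have huw : G.Edge u w := mem_nbF.mp hw.1
      have hu'w : G.Edge u' w := mem_nbF.mp hw'.1
      -- 4-cycle x u w u'
      have h1 : x ≠ u := by rintro rfl; exact G.edge_irrefl x hxu
      have h2 : x ≠ u' := by rintro rfl; exact G.edge_irrefl x hxu'
      have h3 : u ≠ w := by rintro rfl; exact G.edge_irrefl u huw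
      have h4 : u' ≠ w := by rintro rfl; exact G.edge_irrefl u' hu'w
      exact noc4 hg false false false false h1 (Ne.symm hw.2) h2 h3 huu' (Ne.symm h4)
        hxu huw (G.edge_symm hu'w) (G.edge_symm hxu')
  rw [ball, Finset.card_union_of_disjoint d2, Finset.card_union_of_disjoint d1,
    Finset.card_singleton, hE5 x, hbi]

end WithGirth
end LB
section MainLB
namespace LB
variable {V : Type*} [Fintype V] {G : MixedGraph V}

attribute [local instance 10] Classical.propDecidable
attribute [local instance 10] Classical.decEq

lemma lower_bound (hE : ∀ v : V, Nat.card {u | G.Edge v u} = 5)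
    (hA : ∀ v : V, Nat.card {u | G.Arc v u} = 1)
    (hg : ∀ c : MixedCycle G, 6 ≤ c.len)
    (hne : Nonempty V) : 66 ≤ Fintype.card V := by
  classical
  -- neighbour finset cards
  have hE5 : ∀ v : V, (nbF G v).card = 5 := by
    intro v
    have h1 : {u | G.Edge v u}.ncard = 5 := by
      rw [← Nat.card_coe_set_eq]; exact hE v
    rwa [Set.ncard_eq_toFinset_card'] at h1
  -- the arc map
  have hsig : ∀ v : V, ∃ a, {u | G.Arc v u} = {a} := by
    intro v
    rw [← Set.ncard_eq_one, ← Nat.card_coe_set_eq]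
    exact hA v
  choose σ hσ using hsig
  have hArc : ∀ v : V, G.Arc v (σ v) := by
    intro v
    have : σ v ∈ {u | G.Arc v u} := by rw [hσ v]; rfl
    exact this
  -- the configuration
  obtain ⟨z⟩ := hne
  set x := σ z with hx
  set x1 := σ x with hx1
  set x2 := σ x1 with hx2
  set x3 := σ x2 with hx3
  have hz : G.Arc z x := hArc z
  -- distance facts
  have farxz : Far5 G x z := arc_far5 hg hz
  have farx1x : Far5 G x1 x := arc_far5 hg (hArc x)
  have farx2x1 : Far5 G x2 x1 := arc_far5 hg (hArc x1)
  have farx3x2 : Far5 G x3 x2 := arc_far5 hg (hArc x2)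
  have farx1z : Far4 G x1 z := chain2_far4 hg hz (hArc x)
  have farx2x : Far4 G x2 x := chain2_far4 hg (hArc x) (hArc x1)
  have farx3x1 : Far4 G x3 x1 := chain2_far4 hg (hArc x1) (hArc x2)
  have farx2z : Far3 G x2 z := chain3_far3 hg hz (hArc x) (hArc x1)
  have farx3x : Far3 G x3 x := chain3_far3 hg (hArc x) (hArc x1) (hArc x2)
  -- z-specific facts
  have hzx2 : z ≠ x2 := by
    intro h
    have : x = x3 := by rw [hx, h, ← hx3]
    exact farx3x.ne this.symm
  have hEx2z : ¬ G.Edge x2 z := by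
    intro h
    exact noc4 hg true true false true
      (farx1x.far4.far3.ne.symm) (farx2x.far3.ne.symm) (farxz.far4.far3.ne)
      (farx2x1.far4.far3.ne.symm) (farx1z.far3.ne) (Ne.symm hzx2)
      (hArc x) (hArc x1) h hz
  have hzx3 : z ≠ x3 := by
    intro h
    have hzx : G.Arc x3 x := h ▸ hz
    exact noc4 hg true true true true
      (farx1x.far4.far3.ne.symm) (farx2x.far3.ne.symm) (farx3x.ne.symm)
      (farx2x1.far4.far3.ne.symm) (farx3x1.far3.ne.symm) (farx3x2.far4.far3.ne.symm)
      (hArc x) (hArc x1) (hArc x2) hzx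
  have hEx3z : ¬ G.Edge x3 z := by
    intro h
    exact noc5 hg true true true false true
      (farx1x.far4.far3.ne.symm) (farx2x.far3.ne.symm) (farx3x.ne.symm) (farxz.far4.far3.ne)
      (farx2x1.far4.far3.ne.symm) (farx3x1.far3.ne.symm) (farx1z.far3.ne)
      (farx3x2.far4.far3.ne.symm) (Ne.symm hzx2) (Ne.symm hzx3)
      (hArc x) (hArc x1) (hArc x2) h hz
  have hnb_x2_z : Disjoint (nbF G x2) (nbF G z) := by
    rw [Finset.disjoint_left]
    intro w hw hw'
    have h1 : G.Edge x2 w := mem_nbF.mp hw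
    have h2 : G.Edge w z := G.edge_symm (mem_nbF.mp hw')
    have hwx : w ≠ x := fun h => farx2x.far3.nE (h ▸ h1)
    have hwx1 : w ≠ x1 := fun h => farx2x1.far4.far3.nE (h ▸ h1)
    have hwx2 : w ≠ x2 := fun h => G.edge_irrefl x2 (h ▸ h1)
    have hwz : w ≠ z := fun h => G.edge_irrefl z ((h ▸ h2 : G.Edge z z))
    exact noc5 hg true true false false true
      (farx1x.far4.far3.ne.symm) (farx2x.far3.ne.symm) hwx.symm (farxz.far4.far3.ne)
      (farx2x1.far4.far3.ne.symm) hwx1.symm (farx1z.far3.ne)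
      hwx2.symm (Ne.symm hzx2) hwz
      (hArc x) (hArc x1) h1 h2 hz
  -- extra piece
  set ex : Finset V := ({x2, x3, z} : Finset V) ∪ nbF G x2 ∪ nbF G z with hex
  have hcard_trip : ({x2, x3, z} : Finset V).card = 3 := by
    rw [Finset.card_insert_of_notMem, Finset.card_insert_of_notMem, Finset.card_singleton]
    · simp [hzx3.symm]
    · simp [farx3x2.far4.far3.ne.symm, hzx2.symm]
  have htrip_nb2 : Disjoint ({x2, x3, z} : Finset V) (nbF G x2) := by
    rw [Finset.disjoint_left]
    intro w hw hw'
    have h1 : G.Edge x2 w := mem_nbF.mp hw'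
    simp only [Finset.mem_insert, Finset.mem_singleton] at hw
    rcases hw with rfl | rfl | rfl
    · exact G.edge_irrefl _ h1
    · exact farx3x2.far4.far3.nE (G.edge_symm h1)
    · exact hEx2z h1
  have htrip_nbz : Disjoint ({x2, x3, z} : Finset V) (nbF G z) := by
    rw [Finset.disjoint_left]
    intro w hw hw'
    have h1 : G.Edge z w := mem_nbF.mp hw'
    simp only [Finset.mem_insert, Finset.mem_singleton] at hw
    rcases hw with rfl | rfl | rfl
    · exact hEx2z (G.edge_symm h1)
    · exact hEx3z (G.edge_symm h1)
    · exact G.edge_irrefl _ h1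
  have hcard_ex : ex.card = 13 := by
    rw [hex, Finset.card_union_of_disjoint, Finset.card_union_of_disjoint htrip_nb2,
      hcard_trip, hE5 x2, hE5 z]
    rw [Finset.disjoint_union_left]
    exact ⟨htrip_nbz, hnb_x2_z⟩
  -- disjointness of the three big pieces
  have hbb : Disjoint (ball G x) (ball G x1) := ball_disj_ball hg farx1x.symm
  have hdisj_ex_x : Disjoint ex (ball G x) := by
    rw [hex, Finset.disjoint_union_left, Finset.disjoint_union_left]
    refine ⟨⟨?_, ?_⟩, ?_⟩
    · rw [Finset.disjoint_left]
      intro w hw hw'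
      simp only [Finset.mem_insert, Finset.mem_singleton] at hw
      rcases hw with rfl | rfl | rfl
      · exact not_mem_ball hg farx2x.far3.symm hw'
      · exact not_mem_ball hg farx3x.symm hw'
      · exact not_mem_ball hg farxz.far4.far3 hw'
    · exact nb_disj_ball hg farx2x.symm
    · exact nb_disj_ball hg farxz.far4
  have hdisj_ex_x1 : Disjoint ex (ball G x1) := by
    rw [hex, Finset.disjoint_union_left, Finset.disjoint_union_left]
    refine ⟨⟨?_, ?_⟩, ?_⟩
    · rw [Finset.disjoint_left]
      intro w hw hw'
      simp only [Finset.mem_insert, Finset.mem_singleton] at hw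
      rcases hw with rfl | rfl | rfl
      · exact not_mem_ball hg farx2x1.far4.far3.symm hw'
      · exact not_mem_ball hg farx3x1.far3.symm hw'
      · exact not_mem_ball hg farx1z.far3 hw'
    · exact nb_disj_ball hg farx2x1.far4.symm
    · exact nb_disj_ball hg farx1z
  -- total count
  have htot : (ball G x ∪ ball G x1 ∪ ex).card = 65 := by
    rw [Finset.card_union_of_disjoint, Finset.card_union_of_disjoint hbb,
      card_ball hg hE5, card_ball hg hE5, hcard_ex]
    rw [Finset.disjoint_union_left]
    exact ⟨hdisj_ex_x.symm, hdisj_ex_x1.symm⟩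
  have h65 : 65 ≤ Fintype.card V := by
    rw [← htot, ← Finset.card_univ]
    exact Finset.card_le_card (Finset.subset_univ _)
  -- parity: 5 * n is even
  have hpar : ∃ m, 5 * Fintype.card V = 2 * m := by
    set SG : SimpleGraph V :=
      ⟨fun a b => G.Edge a b, ⟨fun a b h => G.edge_symm h⟩, ⟨fun v h => G.edge_irrefl v h⟩⟩ with hSG
    haveI : DecidableRel SG.Adj := fun a b => Classical.propDecidable _
    refine ⟨SG.edgeFinset.card, ?_⟩
    have hdeg : ∀ v : V, SG.degree v = 5 := by
      intro v
      have hnf : SG.neighborFinset v = nbF G v := by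
        ext u
        simp only [SimpleGraph.mem_neighborFinset, mem_nbF]
        try rfl
      exact (congrArg Finset.card hnf).trans (hE5 v)
    have := SG.sum_degrees_eq_twice_card_edges
    calc 5 * Fintype.card V = ∑ v : V, SG.degree v := by
          simp [hdeg, Finset.sum_const, Finset.card_univ, mul_comm]
      _ = 2 * SG.edgeFinset.card := this
  obtain ⟨m, hm⟩ := hpar
  omega

end LB
end MainLB


namespace CON
set_option maxRecDepth 10000

abbrev MV : Type := ZMod 12 × ZMod 6
def p5 (t : ZMod 6) : ZMod 12 := if t.val % 2 = 0 then 1 else 5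
def gmul (a b : MV) : MV := (a.1 + p5 a.2 * b.1, a.2 + b.2)
def ge : MV := (0, 0)

lemma p5_add : ∀ t s : ZMod 6, p5 (t + s) = p5 t * p5 s := by decide
lemma p5_mul_self : ∀ t : ZMod 6, p5 t * p5 t = 1 := by decide

lemma gmul_assoc (a b c : MV) : gmul (gmul a b) c = gmul a (gmul b c) := by
  unfold gmul
  refine Prod.ext ?_ ?_
  · simp only
    rw [p5_add a.2 b.2]
    ring
  · simp only
    rw [add_assoc]

lemma gmul_ge (a : MV) : gmul a ge = a := by
  unfold gmul ge
  simp

lemma gmul_left_cancel {a b c : MV} (h : gmul a b = gmul a c) : b = c := by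
  unfold gmul at h
  have h2 := congrArg Prod.snd h
  have h1 := congrArg Prod.fst h
  simp only at h1 h2
  have hb2 : b.2 = c.2 := add_left_cancel h2
  have hb1 : b.1 = c.1 := by
    have h3 : p5 a.2 * b.1 = p5 a.2 * c.1 := add_left_cancel h1
    have h4 := congrArg (fun t => p5 a.2 * t) h3
    rwa [← mul_assoc, ← mul_assoc, p5_mul_self a.2, one_mul, one_mul] at h4
  exact Prod.ext hb1 hb2

lemma eq_ge_of_gmul_self {a w : MV} (h : gmul a w = a) : w = ge := by
  apply gmul_left_cancel (a := a)
  rw [h, gmul_ge]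

def S : List MV := [(0,1), (0,5), (1,2), (11,4), (4,3)]
def c0 : MV := (9,2)
def D : List MV := S ++ [c0]

lemma S_inv : ∀ s ∈ S, ∃ s' ∈ S, gmul s s' = ge := by decide
lemma ge_not_mem_S : ge ∉ S := by decide
lemma c0_ne_ge : c0 ≠ ge := by decide
lemma S_nodup : S.Nodup := by decide
lemma c0_mem_D : c0 ∈ D := by decide
lemma gmul_c0_c0 : gmul c0 c0 ≠ ge := by decide
lemma test_c0 : ∀ e ∈ D, gmul c0 e ≠ ge ∧ gmul e c0 ≠ ge := by decide
lemma test1 : ∀ d0 ∈ D, d0 ≠ ge := by decide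
lemma test3 : ∀ d0 ∈ D, ∀ d1 ∈ D, ∀ d2 ∈ D, gmul d0 (gmul d1 d2) ≠ ge := by decide
lemma test4 : ∀ d0 ∈ D, ∀ d1 ∈ D, ∀ d2 ∈ D, ∀ d3 ∈ D,
    gmul d0 (gmul d1 (gmul d2 d3)) = ge →
    gmul d0 d1 = ge ∨ gmul d1 d2 = ge ∨ gmul d2 d3 = ge ∨ gmul d3 d0 = ge := by decide
set_option maxHeartbeats 4000000 in
lemma test5 : ∀ d0 ∈ D, ∀ d1 ∈ D, ∀ d2 ∈ D, ∀ d3 ∈ D, ∀ d4 ∈ D,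
    gmul d0 (gmul d1 (gmul d2 (gmul d3 d4))) ≠ ge := by decide

/-- the mixed graph -/
def Gr : MixedGraph MV where
  Edge u v := ∃ s ∈ S, v = gmul u s
  Arc u v := v = gmul u c0
  edge_symm := by
    rintro u v ⟨s, hs, rfl⟩
    obtain ⟨s', hs', hss'⟩ := S_inv s hs
    exact ⟨s', hs', by rw [gmul_assoc, hss', gmul_ge]⟩
  edge_irrefl := by
    rintro v ⟨s, hs, h⟩
    exact ge_not_mem_S (eq_ge_of_gmul_self h.symm ▸ hs)
  arc_irrefl := by
    intro v h
    exact c0_ne_ge (eq_ge_of_gmul_self h.symm)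

lemma deg_edge (v : MV) : Nat.card {u | Gr.Edge v u} = 5 := by
  classical
  have hset : {u | Gr.Edge v u} = ↑((S.map (gmul v)).toFinset) := by
    ext u
    simp only [Set.mem_setOf_eq, List.coe_toFinset, List.mem_map]
    constructor
    · rintro ⟨s, hs, rfl⟩; exact ⟨s, hs, rfl⟩
    · rintro ⟨s, hs, rfl⟩; exact ⟨s, hs, rfl⟩
  rw [hset, Nat.card_coe_set_eq, Set.ncard_coe_finset,
    List.toFinset_card_of_nodup (S_nodup.map (fun a b h => gmul_left_cancel h)),
    List.length_map]
  rfl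

lemma deg_arc (v : MV) : Nat.card {u | Gr.Arc v u} = 1 := by
  have hset : {u | Gr.Arc v u} = ({gmul v c0} : Set MV) := by
    ext u
    simp [Gr, Set.mem_singleton_iff]
  rw [hset, Nat.card_coe_set_eq, Set.ncard_singleton]

/-- the hexagon -/
def hexa : MixedCycle Gr where
  len := 6
  len_pos := by norm_num
  vert i := ((0 : ZMod 12), i)
  useArc _ := false
  step_arc := by intro i h; cases h
  step_edge := by
    intro i _
    refine ⟨(0,1), by decide, ?_⟩
    unfold gmul
    refine Prod.ext ?_ ?_
    · simp
    · rfl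
  arc_once := by intro i j h; cases h
  edge_once := by
    intro i j _ _ h
    have hinj : ∀ a b : ZMod 6, ((0 : ZMod 12), a) = ((0:ZMod 12), b) → a = b := by
      intro a b hab
      exact congrArg Prod.snd hab
    rcases h with ⟨h1, _⟩ | ⟨h1, h2⟩
    · exact hinj _ _ h1
    · exfalso
      have e1 : i = j + 1 := hinj _ _ h1
      have e2 : i + 1 = j := hinj _ _ h2
      rw [e1] at e2
      have e3 : j + (1 + 1) = j + 0 := by rw [add_zero, ← add_assoc]; exact e2
      have e4 := add_left_cancel e3
      exact absurd e4 (by decide)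

lemma girth_low : ∀ c : MixedCycle Gr, 6 ≤ c.len := by
  intro c
  by_contra hlt
  push_neg at hlt
  obtain ⟨n, npos, vert, useArc, sa, se, ao, eo⟩ := c
  simp only at hlt
  -- extract step elements
  have hstep : ∀ i : ZMod n, ∃ dd, dd ∈ D ∧ vert (i+1) = gmul (vert i) dd ∧
      (useArc i = true → dd = c0) := by
    intro i
    cases h : useArc i with
    | true => exact ⟨c0, c0_mem_D, sa i h, fun _ => rfl⟩
    | false =>
      obtain ⟨s, hs, hv⟩ := se i h
      exact ⟨s, List.mem_append.mpr (Or.inl hs), hv, fun hc => absurd hc (by simp [h])⟩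
  choose dd hdmem hdstep hdarc using hstep
  -- backtrack killer (needs 1 ≠ 0 in ZMod n)
  have bt : (1 : ZMod n) ≠ 0 → ∀ i : ZMod n, gmul (dd i) (dd (i+1)) ≠ ge := by
    intro h1 i hbt
    have hd1 : dd i ≠ c0 := by
      intro h
      exact (test_c0 (dd (i+1)) (hdmem _)).1 (h ▸ hbt)
    have hd2 : dd (i+1) ≠ c0 := by
      intro h
      exact (test_c0 (dd i) (hdmem _)).2 (h ▸ hbt)
    have hu1 : useArc i = false := by
      cases h : useArc i with
      | true => exact absurd (hdarc i h) hd1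
      | false => rfl
    have hu2 : useArc (i+1) = false := by
      cases h : useArc (i+1) with
      | true => exact absurd (hdarc _ h) hd2
      | false => rfl
    have hv2 : vert (i+1+1) = vert i := by
      rw [hdstep (i+1), hdstep i, gmul_assoc, hbt, gmul_ge]
    have := eo i (i+1) hu1 hu2 (Or.inr ⟨hv2.symm, rfl⟩)
    exact h1 (left_eq_add.mp this)
  interval_cases n
  · -- n = 1
    have h := hdstep (0 : ZMod 1)
    rw [show ((0:ZMod 1)+1) = 0 from by decide] at h
    exact test1 _ (hdmem 0) (eq_ge_of_gmul_self h.symm)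
  · -- n = 2
    have e0 := hdstep (0 : ZMod 2)
    have e1 := hdstep (1 : ZMod 2)
    rw [show ((0:ZMod 2)+1) = 1 from by decide] at e0
    rw [show ((1:ZMod 2)+1) = 0 from by decide] at e1
    have hv : vert 0 = gmul (vert 0) (gmul (dd 0) (dd 1)) := by
      rw [← gmul_assoc, ← e0, ← e1]
    have hw := eq_ge_of_gmul_self hv.symm
    have := bt (by decide) 0
    rw [show ((0:ZMod 2)+1) = 1 from by decide] at this
    exact this hw
  · -- n = 3
    have e0 := hdstep (0 : ZMod 3)
    have e1 := hdstep (1 : ZMod 3)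
    have e2 := hdstep (2 : ZMod 3)
    rw [show ((0:ZMod 3)+1) = 1 from by decide] at e0
    rw [show ((1:ZMod 3)+1) = 2 from by decide] at e1
    rw [show ((2:ZMod 3)+1) = 0 from by decide] at e2
    have hv : vert 0 = gmul (vert 0) (gmul (dd 0) (gmul (dd 1) (dd 2))) := by
      rw [← gmul_assoc, ← gmul_assoc, ← e0, ← e1, ← e2]
    exact test3 _ (hdmem 0) _ (hdmem 1) _ (hdmem 2) (eq_ge_of_gmul_self hv.symm)
  · -- n = 4
    have e0 := hdstep (0 : ZMod 4)
    have e1 := hdstep (1 : ZMod 4)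
    have e2 := hdstep (2 : ZMod 4)
    have e3 := hdstep (3 : ZMod 4)
    rw [show ((0:ZMod 4)+1) = 1 from by decide] at e0
    rw [show ((1:ZMod 4)+1) = 2 from by decide] at e1
    rw [show ((2:ZMod 4)+1) = 3 from by decide] at e2
    rw [show ((3:ZMod 4)+1) = 0 from by decide] at e3
    have hv : vert 0 = gmul (vert 0) (gmul (dd 0) (gmul (dd 1) (gmul (dd 2) (dd 3)))) := by
      rw [← gmul_assoc, ← gmul_assoc, ← gmul_assoc, ← e0, ← e1, ← e2, ← e3]
    have hw := eq_ge_of_gmul_self hv.symm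
    have hbt := bt (by decide)
    rcases test4 _ (hdmem 0) _ (hdmem 1) _ (hdmem 2) _ (hdmem 3) hw with h | h | h | h
    · exact hbt 0 (by rw [show ((0:ZMod 4)+1) = 1 from by decide]; exact h)
    · exact hbt 1 (by rw [show ((1:ZMod 4)+1) = 2 from by decide]; exact h)
    · exact hbt 2 (by rw [show ((2:ZMod 4)+1) = 3 from by decide]; exact h)
    · exact hbt 3 (by rw [show ((3:ZMod 4)+1) = 0 from by decide]; exact h)
  · -- n = 5
    have e0 := hdstep (0 : ZMod 5)
    have e1 := hdstep (1 : ZMod 5)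
    have e2 := hdstep (2 : ZMod 5)
    have e3 := hdstep (3 : ZMod 5)
    have e4 := hdstep (4 : ZMod 5)
    rw [show ((0:ZMod 5)+1) = 1 from by decide] at e0
    rw [show ((1:ZMod 5)+1) = 2 from by decide] at e1
    rw [show ((2:ZMod 5)+1) = 3 from by decide] at e2
    rw [show ((3:ZMod 5)+1) = 4 from by decide] at e3
    rw [show ((4:ZMod 5)+1) = 0 from by decide] at e4
    have hv : vert 0 = gmul (vert 0)
        (gmul (dd 0) (gmul (dd 1) (gmul (dd 2) (gmul (dd 3) (dd 4))))) := by
      rw [← gmul_assoc, ← gmul_assoc, ← gmul_assoc, ← gmul_assoc,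
        ← e0, ← e1, ← e2, ← e3, ← e4]
    exact test5 _ (hdmem 0) _ (hdmem 1) _ (hdmem 2) _ (hdmem 3) _ (hdmem 4)
      (eq_ge_of_gmul_self hv.symm)

lemma card_MV : Nat.card MV = 72 := by
  rw [Nat.card_eq_fintype_card, Fintype.card_prod, ZMod.card, ZMod.card]

end CON


/-- `66 ≤ f(5,1,6)`, and there is a `(5,1,6)`-graph with `72` vertices. -/
theorem f_5_1_6 :
    (∀ (V : Type) [Fintype V] (G : MixedGraph V),
      IsMixedRZG G 5 1 6 → 66 ≤ Nat.card V) ∧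
    (∃ (V : Type) (_ : Fintype V) (G : MixedGraph V),
      Nat.card V = 72 ∧ IsMixedRZG G 5 1 6) := by
  constructor
  · intro V _ G h
    obtain ⟨hE, hA, hgirth⟩ := h
    obtain ⟨⟨c6, _⟩, hlow⟩ := hgirth
    have hne : Nonempty V := ⟨c6.vert 0⟩
    rw [Nat.card_eq_fintype_card]
    exact LB.lower_bound hE hA hlow hne
  · exact ⟨CON.MV, inferInstance, CON.Gr, CON.card_MV, CON.deg_edge, CON.deg_arc,
      ⟨CON.hexa, rfl⟩, CON.girth_low⟩
end
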